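/- Suppose for every n, p_{ε,n}·p_{ε−1,n} < 0 for all ε ∈ {1,…,d_n−1}, and the limits lim_n ∏_{k=1}^n d_k p_{0,k} and lim_n ∏_{k=1}^n d_k p_{d_k−1,k} are not both 0. Then at every nega-(d_n)-rational point x₀ of [0,1], F̃ is not differentiable: the right and left difference quotients along the sequences x'_k = x₀ + 1/(d₁⋯d_{n+k}) and x''_k = x₀ − 1/(d₁⋯d_{n+k}) have distinct limits (finite or infinite). -/

import Mathlib

/-- The nega-(d_n) value of a digit sequence: ∑_{n≥1} (-1)^{n+1}(1+ε_n)/(d₁⋯d_n). -/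
noncomputable def negaVal (d : ℕ → ℕ) (ε : ℕ → ℕ) : ℝ :=
  ∑' n : ℕ, (-1 : ℝ) ^ (n + 2) * (1 + (ε (n + 1) : ℝ)) / ∏ j ∈ Finset.Icc 1 (n + 1), (d j : ℝ)

/-- ε is a nega-(d_n) representation of x. -/
def IsNegaRepr (d : ℕ → ℕ) (ε : ℕ → ℕ) (x : ℝ) : Prop :=
  (∀ n, 1 ≤ n → ε n < d n) ∧ x = negaVal d ε

/-- β_{i,n} = ∑_{t<i} p_{t,n}. -/
noncomputable def beta (p : ℕ → ℕ → ℝ) (i n : ℕ) : ℝ := ∑ t ∈ Finset.range i, p t n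

/-- p̃_{i,n}: digit i for odd n, digit d_n−1−i for even n. -/
noncomputable def ptil (d : ℕ → ℕ) (p : ℕ → ℕ → ℝ) (i n : ℕ) : ℝ :=
  if Odd n then p i n else p (d n - 1 - i) n

/-- β̃_{i,n}: β at digit i for odd n, at d_n−1−i for even n. -/
noncomputable def betatil (d : ℕ → ℕ) (p : ℕ → ℕ → ℝ) (i n : ℕ) : ℝ :=
  if Odd n then beta p i n else beta p (d n - 1 - i) n

/-- F̃ value on a digit sequence:
β_{ε₁,1} + ∑_{n≥2} β̃_{ε_n,n} ∏_{j<n} p̃_{ε_j,j}. -/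
noncomputable def Ftil (d : ℕ → ℕ) (p : ℕ → ℕ → ℝ) (ε : ℕ → ℕ) : ℝ :=
  beta p (ε 1) 1 +
    ∑' n : ℕ, betatil d p (ε (n + 2)) (n + 2) * ∏ j ∈ Finset.Icc 1 (n + 1), ptil d p (ε j) j

/-!
Set δ_j = ε_j for odd j and δ_j = d_j - 1 - ε_j for even j. Then the nega-(d_n) expansion
becomes the ordinary Cantor series x = ∑ δ_j / D_j with D_j = d₁⋯d_j, and F̃ becomes
F(δ) = β_{δ₁,1} + ∑_{n≥2} β_{δ_n,n} ∏_{j<n} p_{δ_j,j}. A point with two expansions has a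
terminating one, δ = (δ₁, …, δ_n, 0, 0, …) with δ_n ≠ 0; the other is
δ' = (δ₁, …, δ_n - 1, d_{n+1} - 1, d_{n+2} - 1, …).

Replacing the digit m > n of δ by c moves x by c / D_m and F by β_{c,m} ∏_{j<m} p_{δ_j,j}.
Cutting δ' off after m moves x by -1 / D_m and F by -∏_{j≤m} p_{δ'_j,j}. If F had derivative
L at x, the right quotients for c = 1 and c = 2 would show that p_{0,m} Y_m and p_{1,m} Y_m
both tend to L, where Y_m = D_m ∏_{j<m} p_{δ_j,j}. Since p_{0,m} p_{1,m} < 0, this gives L = 0.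
Up to nonzero constant factors, the right quotient for c = 1 and the left quotient are
∏_{k≤m} d_k p_{0,k} and ∏_{k≤m} d_k p_{d_k-1,k}, so both products would tend to 0. The digit
c = 2 exists because d_n ≥ 3: for d_n = 2, p_{0,n} + p_{1,n} = 1 with both in (-1, 1) would
make both positive, against p_{0,n} p_{1,n} < 0.
-/

open Filter Finset Topology Function

noncomputable def cantorDenom (d : ℕ → ℕ) (m : ℕ) : ℝ := ∏ j ∈ Icc 1 m, (d j : ℝ)

def Admissible (d σ : ℕ → ℕ) : Prop := ∀ n, 1 ≤ n → σ n < d n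

noncomputable def cantorValTerm (d σ : ℕ → ℕ) (k : ℕ) : ℝ := σ (k + 1) / cantorDenom d (k + 1)

noncomputable def cantorVal (d σ : ℕ → ℕ) : ℝ := ∑' k, cantorValTerm d σ k

noncomputable def cantorFTerm (p : ℕ → ℕ → ℝ) (σ : ℕ → ℕ) (k : ℕ) : ℝ :=
  beta p (σ (k + 1)) (k + 1) * ∏ j ∈ Icc 1 k, p (σ j) j

-- shaped like `Ftil` rather than `∑' k, cantorFTerm p σ k`: the series need not be summable
noncomputable def cantorF (p : ℕ → ℕ → ℝ) (σ : ℕ → ℕ) : ℝ :=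
  beta p (σ 1) 1 + ∑' k, cantorFTerm p σ (k + 1)

lemma hasSum_sub_succ {E : Type*} [AddCommGroup E] [TopologicalSpace E] [IsTopologicalAddGroup E]
    {u : ℕ → E} (hu : Summable u) : HasSum (fun n => u n - u (n + 1)) (u 0) := by
  simpa using hu.hasSum.sub ((hasSum_nat_add_iff' 1).2 hu.hasSum)

section Denominator

variable {d : ℕ → ℕ}

@[simp] lemma cantorDenom_zero : cantorDenom d 0 = 1 := by simp [cantorDenom]

lemma cantorDenom_succ (m : ℕ) : cantorDenom d (m + 1) = cantorDenom d m * d (m + 1) :=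
  prod_Icc_succ_top (by omega) _

lemma cantorDenom_nonneg (m : ℕ) : 0 ≤ cantorDenom d m :=
  prod_nonneg fun _ _ => Nat.cast_nonneg _

lemma cantorDenom_pos (hd : ∀ n, 1 ≤ n → 2 ≤ d n) (m : ℕ) : 0 < cantorDenom d m :=
  prod_pos fun j hj => Nat.cast_pos.2 (by have := hd j (mem_Icc.1 hj).1; omega)

lemma two_pow_le_cantorDenom (hd : ∀ n, 1 ≤ n → 2 ≤ d n) (m : ℕ) :
    (2 : ℝ) ^ m ≤ cantorDenom d m := by
  induction m with
  | zero => simp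
  | succ m ih =>
    rw [pow_succ, cantorDenom_succ]
    exact mul_le_mul ih (by exact_mod_cast hd (m + 1) (by omega)) zero_le_two (cantorDenom_nonneg m)

lemma tendsto_cantorDenom_atTop (hd : ∀ n, 1 ≤ n → 2 ≤ d n) : Tendsto (cantorDenom d) atTop atTop :=
  tendsto_atTop_mono (two_pow_le_cantorDenom hd) (tendsto_pow_atTop_atTop_of_one_lt one_lt_two)

lemma summable_inv_cantorDenom (hd : ∀ n, 1 ≤ n → 2 ≤ d n) :
    Summable fun m => (cantorDenom d m)⁻¹ :=
  summable_geometric_two.of_nonneg_of_le (fun m => inv_nonneg.2 (cantorDenom_nonneg m)) fun m => by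
    rw [one_div, inv_pow]
    exact inv_anti₀ (by positivity) (two_pow_le_cantorDenom hd m)

lemma natCast_div_cantorDenom_succ (hd : ∀ n, 1 ≤ n → 2 ≤ d n) (m : ℕ) :
    (d (m + 1) : ℝ) / cantorDenom d (m + 1) = (cantorDenom d m)⁻¹ := by
  have hdm : (0 : ℝ) < d (m + 1) := Nat.cast_pos.2 (by have := hd (m + 1) (by omega); omega)
  rw [cantorDenom_succ, div_mul_cancel_right₀ hdm.ne']

end Denominator

section CantorValue

variable {d σ τ : ℕ → ℕ}

lemma cantorValTerm_nonneg (k : ℕ) : 0 ≤ cantorValTerm d σ k :=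
  div_nonneg (Nat.cast_nonneg _) (cantorDenom_nonneg _)

lemma cantorValTerm_le (hd : ∀ n, 1 ≤ n → 2 ≤ d n) (hσ : Admissible d σ) (k : ℕ) :
    cantorValTerm d σ k ≤ (cantorDenom d k)⁻¹ - (cantorDenom d (k + 1))⁻¹ := by
  have hσk : (σ (k + 1) : ℝ) + 1 ≤ d (k + 1) := by exact_mod_cast hσ (k + 1) (by omega)
  rw [← natCast_div_cantorDenom_succ hd, cantorValTerm, ← one_div, ← sub_div]
  exact div_le_div_of_nonneg_right (by linarith) (cantorDenom_nonneg _)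

lemma summable_cantorValTerm (hd : ∀ n, 1 ≤ n → 2 ≤ d n) (hσ : Admissible d σ) :
    Summable (cantorValTerm d σ) :=
  (hasSum_sub_succ (summable_inv_cantorDenom hd)).summable.of_nonneg_of_le cantorValTerm_nonneg
    (cantorValTerm_le hd hσ)

lemma tsum_cantorValTerm_add_le (hd : ∀ n, 1 ≤ n → 2 ≤ d n) (hσ : Admissible d σ) (n : ℕ) :
    ∑' k, cantorValTerm d σ (k + n) ≤ (cantorDenom d n)⁻¹ := by
  have h := hasSum_sub_succ ((summable_nat_add_iff n).2 (summable_inv_cantorDenom hd))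
  rw [zero_add] at h
  refine hasSum_le (fun k => ?_)
    ((summable_nat_add_iff n).2 (summable_cantorValTerm hd hσ)).hasSum h
  rw [add_right_comm]
  exact cantorValTerm_le hd hσ (k + n)

lemma cantorVal_mem_Icc (hd : ∀ n, 1 ≤ n → 2 ≤ d n) (hσ : Admissible d σ) :
    cantorVal d σ ∈ Set.Icc (0 : ℝ) 1 :=
  ⟨tsum_nonneg cantorValTerm_nonneg, by simpa [cantorVal] using tsum_cantorValTerm_add_le hd hσ 0⟩

lemma cantorVal_congr (h : ∀ j, 1 ≤ j → σ j = τ j) : cantorVal d σ = cantorVal d τ := by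
  simp only [cantorVal, cantorValTerm, h _ (Nat.le_add_left 1 _)]

lemma sum_cantorValTerm_congr {m : ℕ} (h : ∀ j, 1 ≤ j → j ≤ m → σ j = τ j) :
    ∑ k ∈ range m, cantorValTerm d σ k = ∑ k ∈ range m, cantorValTerm d τ k :=
  sum_congr rfl fun k hk => by
    rw [cantorValTerm, cantorValTerm, h (k + 1) (by omega) (by simp at hk; omega)]

lemma cantorVal_eq_sum {m : ℕ} (h : ∀ j, m < j → σ j = 0) :
    cantorVal d σ = ∑ k ∈ range m, cantorValTerm d σ k :=
  tsum_eq_sum fun k hk => by simp [cantorValTerm, h (k + 1) (by simp at hk; omega)]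

end CantorValue

section CantorF

variable {p : ℕ → ℕ → ℝ} {σ τ : ℕ → ℕ}

@[simp] lemma beta_zero (n : ℕ) : beta p 0 n = 0 := by simp [beta]

lemma beta_one (n : ℕ) : beta p 1 n = p 0 n := by simp [beta]

lemma beta_succ (i n : ℕ) : beta p (i + 1) n = beta p i n + p i n := sum_range_succ _ _

lemma cantorFTerm_congr {k : ℕ} (h : ∀ j, 1 ≤ j → j ≤ k + 1 → σ j = τ j) :
    cantorFTerm p σ k = cantorFTerm p τ k := by
  rw [cantorFTerm, cantorFTerm, h (k + 1) (by omega) le_rfl,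
    prod_congr rfl fun j hj => by rw [h j (mem_Icc.1 hj).1 (by have := (mem_Icc.1 hj).2; omega)]]

lemma cantorF_congr (h : ∀ j, 1 ≤ j → σ j = τ j) : cantorF p σ = cantorF p τ := by
  rw [cantorF, cantorF, h 1 le_rfl]
  simp only [cantorFTerm_congr fun j hj _ => h j hj]

lemma sum_cantorFTerm_congr {m : ℕ} (h : ∀ j, 1 ≤ j → j ≤ m → σ j = τ j) :
    ∑ k ∈ range m, cantorFTerm p σ k = ∑ k ∈ range m, cantorFTerm p τ k :=
  sum_congr rfl fun k hk => cantorFTerm_congr fun j h1 h2 => h j h1 (by simp at hk; omega)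

lemma cantorF_eq_sum {m : ℕ} (h : ∀ j, m < j → σ j = 0) :
    cantorF p σ = ∑ k ∈ range m, cantorFTerm p σ k := by
  have hT : ∀ k ∉ range m, cantorFTerm p σ k = 0 := fun k hk => by
    rw [cantorFTerm, h (k + 1) (by simp at hk; omega), beta_zero, zero_mul]
  have hs : HasSum (cantorFTerm p σ) (∑ k ∈ range m, cantorFTerm p σ k) :=
    hasSum_sum_of_ne_finset_zero hT
  rw [← hs.tsum_eq, hs.summable.tsum_eq_zero_add, cantorF, cantorFTerm]
  simp

end CantorF

def tildeDigits (d ε : ℕ → ℕ) (j : ℕ) : ℕ := if Odd j then ε j else d j - 1 - ε j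

section NegaExpansion

variable {d ε σ τ : ℕ → ℕ} {p : ℕ → ℕ → ℝ}

lemma Admissible.tildeDigits (hε : Admissible d ε) : Admissible d (tildeDigits d ε) :=
    fun n hn => by
  have := hε n hn
  unfold _root_.tildeDigits
  split_ifs <;> omega

lemma tildeDigits_tildeDigits (hσ : Admissible d σ) {j : ℕ} (hj : 1 ≤ j) :
    tildeDigits d (tildeDigits d σ) j = σ j := by
  have := hσ j hj
  unfold tildeDigits
  split_ifs <;> omega

lemma tildeDigits_ne (hσ : Admissible d σ) (hτ : Admissible d τ) {j : ℕ} (hj : 1 ≤ j)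
    (h : σ j ≠ τ j) : tildeDigits d σ j ≠ tildeDigits d τ j := by
  have := hσ j hj
  have := hτ j hj
  unfold tildeDigits
  split_ifs <;> omega

lemma negaVal_eq_cantorVal (hd : ∀ n, 1 ≤ n → 2 ≤ d n) (hε : Admissible d ε) :
    negaVal d ε = cantorVal d (tildeDigits d ε) := by
  -- the k-th nega-term minus the k-th Cantor term is 1 / D_{k+1} for even k and -1 / D_k for odd k
  set u : ℕ → ℝ := fun k => if Odd k then -(cantorDenom d k)⁻¹ else 0
  have hu : Summable u := (summable_inv_cantorDenom hd).of_norm_bounded fun k => by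
    have h0 := cantorDenom_nonneg (d := d) k
    simp only [u]
    split_ifs <;> simp [abs_of_nonneg h0, h0]
  have hterm : ∀ k, (-1 : ℝ) ^ (k + 2) * (1 + (ε (k + 1) : ℝ)) / cantorDenom d (k + 1)
      = cantorValTerm d (tildeDigits d ε) k + (u k - u (k + 1)) := by
    intro k
    rcases Nat.even_or_odd k with hk | hk
    · have hs : (-1 : ℝ) ^ (k + 2) = 1 := (hk.add even_two).neg_one_pow
      have ht : tildeDigits d ε (k + 1) = ε (k + 1) := if_pos hk.add_one
      have hu0 : u k = 0 := if_neg (Nat.not_odd_iff_even.2 hk)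
      have hu1 : u (k + 1) = -(cantorDenom d (k + 1))⁻¹ := if_pos hk.add_one
      rw [cantorValTerm, hs, ht, hu0, hu1]
      ring
    · have hk' : ¬ Odd (k + 1) := Nat.not_odd_iff_even.2 hk.add_one
      have hεk := hε (k + 1) (by omega)
      have hs : (-1 : ℝ) ^ (k + 2) = -1 := (hk.add_even even_two).neg_one_pow
      have ht : (tildeDigits d ε (k + 1) : ℝ) = d (k + 1) - 1 - ε (k + 1) := by
        rw [tildeDigits, if_neg hk', Nat.cast_sub (by omega), Nat.cast_sub (by omega), Nat.cast_one]
      have hu0 : u k = -(cantorDenom d k)⁻¹ := if_pos hk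
      have hu1 : u (k + 1) = 0 := if_neg hk'
      rw [cantorValTerm, hs, ht, hu0, hu1, ← natCast_div_cantorDenom_succ hd]
      ring
  have h := (summable_cantorValTerm hd hε.tildeDigits).hasSum.add (hasSum_sub_succ hu)
  simp only [u, Nat.not_odd_zero, if_false, add_zero, ← hterm] at h
  exact h.tsum_eq

lemma Ftil_eq_cantorF : Ftil d p ε = cantorF p (tildeDigits d ε) := by
  have hβ : ∀ j, betatil d p (ε j) j = beta p (tildeDigits d ε j) j := fun j => by
    unfold betatil tildeDigits
    split_ifs <;> rfl
  have hp : ∀ j, ptil d p (ε j) j = p (tildeDigits d ε j) j := fun j => by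
    unfold ptil tildeDigits
    split_ifs <;> rfl
  have h1 : tildeDigits d ε 1 = ε 1 := if_pos odd_one
  simp only [Ftil, cantorF, cantorFTerm, hβ, hp, h1]

lemma apply_cantorVal_eq_cantorF (hd : ∀ n, 1 ≤ n → 2 ≤ d n)
    {F : ℝ → ℝ} (hF : ∀ x ∈ Set.Icc (0 : ℝ) 1, ∀ ε, IsNegaRepr d ε x → F x = Ftil d p ε)
    (hσ : Admissible d σ) : F (cantorVal d σ) = cantorF p σ := by
  have hinv : ∀ j, 1 ≤ j → tildeDigits d (tildeDigits d σ) j = σ j :=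
    fun j hj => tildeDigits_tildeDigits hσ hj
  have hε := Admissible.tildeDigits hσ
  have hrepr : IsNegaRepr d (tildeDigits d σ) (cantorVal d σ) :=
    ⟨hε, by rw [negaVal_eq_cantorVal hd hε, cantorVal_congr hinv]⟩
  rw [hF _ (cantorVal_mem_Icc hd hσ) _ hrepr, Ftil_eq_cantorF, cantorF_congr hinv]

end NegaExpansion

section Terminating

variable {d σ τ : ℕ → ℕ}

lemma eq_zero_of_cantorVal_eq (hd : ∀ n, 1 ≤ n → 2 ≤ d n) (hσ : Admissible d σ)
    (hτ : Admissible d τ) (hv : cantorVal d σ = cantorVal d τ) {n : ℕ} (hn : 1 ≤ n)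
    (hagree : ∀ j, 1 ≤ j → j < n → σ j = τ j) (hlt : τ n < σ n) : ∀ j, n < j → σ j = 0 := by
  have hsplit : ∀ ρ, Admissible d ρ →
      cantorVal d ρ = ∑ k ∈ range n, cantorValTerm d ρ k + ∑' k, cantorValTerm d ρ (k + n) :=
    fun ρ hρ => ((summable_cantorValTerm hd hρ).sum_add_tsum_nat_add n).symm
  -- the head of σ beats that of τ by at least 1 / D_n, the largest possible tail of τ
  have hhead : ∑ k ∈ range n, cantorValTerm d τ k + (cantorDenom d n)⁻¹
      ≤ ∑ k ∈ range n, cantorValTerm d σ k := by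
    obtain ⟨n, rfl⟩ : ∃ n', n = n' + 1 := ⟨n - 1, by omega⟩
    have hlt' : (τ (n + 1) : ℝ) + 1 ≤ σ (n + 1) := by exact_mod_cast hlt
    rw [sum_range_succ, sum_range_succ,
      sum_cantorValTerm_congr fun j h1 h2 => hagree j h1 (by omega),
      cantorValTerm, cantorValTerm, add_assoc, ← one_div, ← add_div]
    gcongr
    exact cantorDenom_nonneg _
  have htail : ∑' k, cantorValTerm d σ (k + n) = 0 :=
    le_antisymm (by linarith [hsplit σ hσ, hsplit τ hτ, tsum_cantorValTerm_add_le hd hτ n])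
      (tsum_nonneg fun _ => cantorValTerm_nonneg _)
  have hzero := (hasSum_zero_iff_of_nonneg fun k => cantorValTerm_nonneg (k + n)).1
    (htail ▸ ((summable_nat_add_iff n).2 (summable_cantorValTerm hd hσ)).hasSum)
  intro j hj
  have hj' := congrFun hzero (j - 1 - n)
  rw [Pi.zero_apply, cantorValTerm, show j - 1 - n + n + 1 = j by omega,
    div_eq_zero_iff, or_iff_left (cantorDenom_pos hd _).ne'] at hj'
  exact_mod_cast hj'

lemma exists_terminating_of_cantorVal_eq (hd : ∀ n, 1 ≤ n → 2 ≤ d n) (hσ : Admissible d σ)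
    (hτ : Admissible d τ) (hv : cantorVal d σ = cantorVal d τ) (hne : ∃ n, 1 ≤ n ∧ σ n ≠ τ n) :
    ∃ ρ n, Admissible d ρ ∧ cantorVal d ρ = cantorVal d σ ∧ 1 ≤ n ∧ ρ n ≠ 0 ∧
      ∀ j, n < j → ρ j = 0 := by
  classical
  obtain ⟨hn, hσn⟩ := Nat.find_spec hne
  have hagree : ∀ j, 1 ≤ j → j < Nat.find hne → σ j = τ j :=
    fun j h1 h2 => not_not.1 fun h => Nat.find_min hne h2 ⟨h1, h⟩
  rcases lt_or_gt_of_ne hσn with hlt | hlt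
  · exact ⟨τ, _, hτ, hv.symm, hn, by omega,
      eq_zero_of_cantorVal_eq hd hτ hσ hv.symm hn (fun j h1 h2 => (hagree j h1 h2).symm) hlt⟩
  · exact ⟨σ, _, hσ, rfl, hn, by omega, eq_zero_of_cantorVal_eq hd hσ hτ hv hn hagree hlt⟩

lemma exists_terminating_of_isNegaRepr (hd : ∀ n, 1 ≤ n → 2 ≤ d n) {ε ε' : ℕ → ℕ} {x : ℝ}
    (h : IsNegaRepr d ε x) (h' : IsNegaRepr d ε' x) (hne : ∃ n, 1 ≤ n ∧ ε n ≠ ε' n) :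
    ∃ δ n, Admissible d δ ∧ cantorVal d δ = x ∧ 1 ≤ n ∧ δ n ≠ 0 ∧ ∀ j, n < j → δ j = 0 := by
  obtain ⟨n, hn, hεn⟩ := hne
  have hv : cantorVal d (tildeDigits d ε) = cantorVal d (tildeDigits d ε') := by
    rw [← negaVal_eq_cantorVal hd h.1, ← negaVal_eq_cantorVal hd h'.1, ← h.2, ← h'.2]
  rw [h.2, negaVal_eq_cantorVal hd h.1]
  exact exists_terminating_of_cantorVal_eq hd (Admissible.tildeDigits h.1)
    (Admissible.tildeDigits h'.1) hv
    ⟨n, hn, tildeDigits_ne h.1 h'.1 hn hεn⟩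

end Terminating

def truncate (σ : ℕ → ℕ) (m j : ℕ) : ℕ := if j ≤ m then σ j else 0

def altDigits (d δ : ℕ → ℕ) (n j : ℕ) : ℕ :=
  if j < n then δ j else if j = n then δ n - 1 else d j - 1

/- With V_m and S_m the m-th partial sums of `cantorVal d σ` and `cantorF p σ`, the cylinder of
σ₁ … σ_m is [V_m, V_m + 1 / D_m], and F maps its endpoints to S_m and S_m + ∏_{j≤m} p_{σ_j,j}. -/
section Cylinders

variable {d σ τ δ : ℕ → ℕ} {p : ℕ → ℕ → ℝ}

lemma sum_cantorValTerm_succ_add_inv (m : ℕ) :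
    ∑ k ∈ range (m + 1), cantorValTerm d σ k + (cantorDenom d (m + 1))⁻¹
      = ∑ k ∈ range m, cantorValTerm d σ k + ((σ (m + 1) + 1 : ℕ) : ℝ) / cantorDenom d (m + 1) := by
  rw [sum_range_succ, cantorValTerm]
  push_cast
  ring

lemma sum_cantorFTerm_succ_add_prod (m : ℕ) :
    ∑ k ∈ range (m + 1), cantorFTerm p σ k + ∏ j ∈ Icc 1 (m + 1), p (σ j) j
      = ∑ k ∈ range m, cantorFTerm p σ k
        + beta p (σ (m + 1) + 1) (m + 1) * ∏ j ∈ Icc 1 m, p (σ j) j := by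
  rw [sum_range_succ, cantorFTerm, prod_Icc_succ_top (by omega), beta_succ]
  ring

lemma sum_cantorValTerm_add_inv_eq (hd : ∀ n, 1 ≤ n → 2 ≤ d n) {n m : ℕ}
    (htail : ∀ j, n < j → σ j + 1 = d j) (hm : n ≤ m) :
    ∑ k ∈ range m, cantorValTerm d σ k + (cantorDenom d m)⁻¹
      = ∑ k ∈ range n, cantorValTerm d σ k + (cantorDenom d n)⁻¹ := by
  induction m, hm using Nat.le_induction with
  | base => rfl
  | succ m hm ih =>
    rw [sum_cantorValTerm_succ_add_inv, htail (m + 1) (by omega), natCast_div_cantorDenom_succ hd,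
      ih]

lemma sum_cantorFTerm_add_prod_eq (hsum : ∀ n, 1 ≤ n → beta p (d n) n = 1) {n m : ℕ}
    (htail : ∀ j, n < j → σ j + 1 = d j) (hm : n ≤ m) :
    ∑ k ∈ range m, cantorFTerm p σ k + ∏ j ∈ Icc 1 m, p (σ j) j
      = ∑ k ∈ range n, cantorFTerm p σ k + ∏ j ∈ Icc 1 n, p (σ j) j := by
  induction m, hm using Nat.le_induction with
  | base => rfl
  | succ m hm ih =>
    rw [sum_cantorFTerm_succ_add_prod, htail (m + 1) (by omega), hsum (m + 1) (by omega), one_mul,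
      ih]

lemma sum_cantorValTerm_add_inv_of_succ_eq {m : ℕ} (hagree : ∀ j, 1 ≤ j → j ≤ m → τ j = σ j)
    (hτ : τ (m + 1) + 1 = σ (m + 1)) :
    ∑ k ∈ range (m + 1), cantorValTerm d τ k + (cantorDenom d (m + 1))⁻¹
      = ∑ k ∈ range (m + 1), cantorValTerm d σ k := by
  rw [sum_cantorValTerm_succ_add_inv, hτ, sum_cantorValTerm_congr hagree, sum_range_succ,
    cantorValTerm]

lemma sum_cantorFTerm_add_prod_of_succ_eq {m : ℕ} (hagree : ∀ j, 1 ≤ j → j ≤ m → τ j = σ j)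
    (hτ : τ (m + 1) + 1 = σ (m + 1)) :
    ∑ k ∈ range (m + 1), cantorFTerm p τ k + ∏ j ∈ Icc 1 (m + 1), p (τ j) j
      = ∑ k ∈ range (m + 1), cantorFTerm p σ k := by
  rw [sum_cantorFTerm_succ_add_prod, hτ, sum_cantorFTerm_congr hagree, sum_range_succ, cantorFTerm,
    prod_congr rfl fun j hj => by rw [hagree j (mem_Icc.1 hj).1 (mem_Icc.1 hj).2]]

lemma Admissible.truncate (hd : ∀ n, 1 ≤ n → 2 ≤ d n) (hσ : Admissible d σ) (m : ℕ) :
    Admissible d (truncate σ m) := fun j hj => by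
  unfold _root_.truncate
  split_ifs
  · exact hσ j hj
  · have := hd j hj
    omega

lemma cantorVal_truncate (σ : ℕ → ℕ) (m : ℕ) :
    cantorVal d (truncate σ m) = ∑ k ∈ range m, cantorValTerm d σ k := by
  rw [cantorVal_eq_sum (σ := truncate σ m) (m := m) fun j hj => if_neg (by omega)]
  exact sum_cantorValTerm_congr fun j _ hj => if_pos hj

lemma cantorF_truncate (σ : ℕ → ℕ) (m : ℕ) :
    cantorF p (truncate σ m) = ∑ k ∈ range m, cantorFTerm p σ k := by
  rw [cantorF_eq_sum (σ := truncate σ m) (m := m) fun j hj => if_neg (by omega)]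
  exact sum_cantorFTerm_congr fun j _ hj => if_pos hj

lemma cantorVal_update {m : ℕ} (hzero : ∀ j, m < j → σ j = 0) (c : ℕ) :
    cantorVal d (update σ (m + 1) c) = cantorVal d σ + c / cantorDenom d (m + 1) := by
  rw [cantorVal_eq_sum (m := m + 1) fun j hj => by rw [update_of_ne (by omega), hzero j (by omega)],
    cantorVal_eq_sum hzero, sum_range_succ,
    sum_cantorValTerm_congr fun j _ hj => update_of_ne (by omega) _ _,
    cantorValTerm, update_self]

lemma cantorF_update {m : ℕ} (hzero : ∀ j, m < j → σ j = 0) (c : ℕ) :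
    cantorF p (update σ (m + 1) c) = cantorF p σ + beta p c (m + 1) * ∏ j ∈ Icc 1 m, p (σ j) j := by
  rw [cantorF_eq_sum (m := m + 1) fun j hj => by rw [update_of_ne (by omega), hzero j (by omega)],
    cantorF_eq_sum hzero, sum_range_succ,
    sum_cantorFTerm_congr fun j _ hj => update_of_ne (by omega) _ _,
    cantorFTerm, update_self, prod_congr rfl fun j hj => by
      rw [update_of_ne (by have := (mem_Icc.1 hj).2; omega)]]

lemma Admissible.altDigits (hd : ∀ n, 1 ≤ n → 2 ≤ d n) (hδ : Admissible d δ) (n : ℕ) :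
    Admissible d (altDigits d δ n) := fun j hj => by
  have := hd j hj
  have := hδ j hj
  unfold _root_.altDigits
  split_ifs with h1 h2
  · omega
  · subst h2
    omega
  · omega

lemma altDigits_of_lt {n j : ℕ} (h : j < n) : altDigits d δ n j = δ j := if_pos h

lemma altDigits_self_add_one {n : ℕ} (hδn : δ n ≠ 0) : altDigits d δ n n + 1 = δ n := by
  rw [altDigits, if_neg (lt_irrefl n), if_pos rfl]
  omega

lemma altDigits_of_gt {n j : ℕ} (h : n < j) : altDigits d δ n j = d j - 1 := by
  rw [altDigits, if_neg (by omega), if_neg (by omega)]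

lemma sum_cantorValTerm_altDigits (hd : ∀ n, 1 ≤ n → 2 ≤ d n) {n m : ℕ} (hn : 1 ≤ n)
    (hδn : δ n ≠ 0) (hm : n ≤ m) :
    ∑ k ∈ range m, cantorValTerm d (altDigits d δ n) k + (cantorDenom d m)⁻¹
      = ∑ k ∈ range n, cantorValTerm d δ k := by
  rw [sum_cantorValTerm_add_inv_eq hd (fun j hj => by
    rw [altDigits_of_gt hj]; have := hd j (by omega); omega) hm]
  obtain ⟨n, rfl⟩ : ∃ n', n = n' + 1 := ⟨n - 1, by omega⟩
  exact sum_cantorValTerm_add_inv_of_succ_eq (fun j _ hj => altDigits_of_lt (by omega))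
    (altDigits_self_add_one hδn)

lemma sum_cantorFTerm_altDigits (hd : ∀ n, 1 ≤ n → 2 ≤ d n) (hsum : ∀ n, 1 ≤ n → beta p (d n) n = 1)
    {n m : ℕ} (hn : 1 ≤ n) (hδn : δ n ≠ 0) (hm : n ≤ m) :
    ∑ k ∈ range m, cantorFTerm p (altDigits d δ n) k + ∏ j ∈ Icc 1 m, p (altDigits d δ n j) j
      = ∑ k ∈ range n, cantorFTerm p δ k := by
  rw [sum_cantorFTerm_add_prod_eq hsum (fun j hj => by
    rw [altDigits_of_gt hj]; have := hd j (by omega); omega) hm]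
  obtain ⟨n, rfl⟩ : ∃ n', n = n' + 1 := ⟨n - 1, by omega⟩
  exact sum_cantorFTerm_add_prod_of_succ_eq (fun j _ hj => altDigits_of_lt (by omega))
    (altDigits_self_add_one hδn)

end Cylinders

section Slopes

variable {d δ : ℕ → ℕ} {p : ℕ → ℕ → ℝ} {G : ℝ → ℝ} {L : ℝ}

lemma apply_add_div_cantorDenom (hG : ∀ σ, Admissible d σ → G (cantorVal d σ) = cantorF p σ)
    (hδ : Admissible d δ) {m c : ℕ} (hzero : ∀ j, m < j → δ j = 0) (hc : c < d (m + 1)) :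
    G (cantorVal d δ + c / cantorDenom d (m + 1))
      = G (cantorVal d δ) + beta p c (m + 1) * ∏ j ∈ Icc 1 m, p (δ j) j := by
  have hσ : Admissible d (update δ (m + 1) c) := fun j hj => by
    rcases eq_or_ne j (m + 1) with rfl | h
    · rwa [update_self]
    · rw [update_of_ne h]
      exact hδ j hj
  rw [← cantorVal_update hzero, hG _ hσ, hG _ hδ, cantorF_update hzero]

lemma apply_sub_inv_cantorDenom (hd : ∀ n, 1 ≤ n → 2 ≤ d n) (hsum : ∀ n, 1 ≤ n → beta p (d n) n = 1)
    (hG : ∀ σ, Admissible d σ → G (cantorVal d σ) = cantorF p σ) (hδ : Admissible d δ) {n m : ℕ}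
    (hn : 1 ≤ n) (hδn : δ n ≠ 0) (hzero : ∀ j, n < j → δ j = 0) (hm : n ≤ m) :
    G (cantorVal d δ - (cantorDenom d m)⁻¹)
      = G (cantorVal d δ) - ∏ j ∈ Icc 1 m, p (altDigits d δ n j) j := by
  have hv : cantorVal d δ - (cantorDenom d m)⁻¹ = cantorVal d (truncate (altDigits d δ n) m) := by
    rw [cantorVal_truncate, cantorVal_eq_sum hzero, ← sum_cantorValTerm_altDigits hd hn hδn hm,
      add_sub_cancel_right]
  have hF : cantorF p δ - ∏ j ∈ Icc 1 m, p (altDigits d δ n j) j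
      = cantorF p (truncate (altDigits d δ n) m) := by
    rw [cantorF_truncate, cantorF_eq_sum hzero, ← sum_cantorFTerm_altDigits hd hsum hn hδn hm,
      add_sub_cancel_right]
  rw [hv, hG _ ((hδ.altDigits hd n).truncate hd m), hG _ hδ, hF]

lemma HasDerivAt.tendsto_inv_mul_sub {x : ℝ} (h : HasDerivAt G L x) {t : ℕ → ℝ}
    (ht : Tendsto t atTop (𝓝 0)) (ht0 : ∀ k, t k ≠ 0) :
    Tendsto (fun k => (t k)⁻¹ * (G (x + t k) - G x)) atTop (𝓝 L) :=
  h.tendsto_slope_zero.comp (tendsto_nhdsWithin_iff.2 ⟨ht, Eventually.of_forall ht0⟩)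

lemma tendsto_right_slope (hd : ∀ n, 1 ≤ n → 2 ≤ d n)
    (hG : ∀ σ, Admissible d σ → G (cantorVal d σ) = cantorF p σ) (hδ : Admissible d δ) {n : ℕ}
    (hzero : ∀ j, n < j → δ j = 0) (hder : HasDerivAt G L (cantorVal d δ)) {c : ℕ} (hc0 : c ≠ 0)
    (hc : ∀ j, n < j → c < d j) :
    Tendsto (fun m => beta p c (m + 1) * (cantorDenom d (m + 1) * ∏ j ∈ Icc 1 m, p (δ j) j) / c)
      atTop (𝓝 L) := by
  have ht : Tendsto (fun m => (c : ℝ) / cantorDenom d (m + 1)) atTop (𝓝 0) :=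
    tendsto_const_nhds.div_atTop ((tendsto_add_atTop_iff_nat 1).2 (tendsto_cantorDenom_atTop hd))
  refine (hder.tendsto_inv_mul_sub ht fun m => div_ne_zero (Nat.cast_ne_zero.2 hc0)
    (cantorDenom_pos hd _).ne').congr' (eventually_atTop.2 ⟨n, fun m hm => ?_⟩)
  rw [apply_add_div_cantorDenom hG hδ (fun j hj => hzero j (by omega)) (hc _ (by omega)),
    add_sub_cancel_left, inv_div]
  ring

lemma tendsto_prod_right (hd : ∀ n, 1 ≤ n → 2 ≤ d n)
    (hG : ∀ σ, Admissible d σ → G (cantorVal d σ) = cantorF p σ) (hδ : Admissible d δ) {n : ℕ}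
    (hzero : ∀ j, n < j → δ j = 0) (hder : HasDerivAt G L (cantorVal d δ)) :
    Tendsto (fun m => ∏ j ∈ Icc 1 m, (d j : ℝ) * p (δ j) j) atTop (𝓝 L) := by
  refine (tendsto_add_atTop_iff_nat 1).1 ((tendsto_right_slope hd hG hδ hzero hder one_ne_zero
    fun j hj => hd j (by omega)).congr' (eventually_atTop.2 ⟨n, fun m hm => ?_⟩))
  dsimp only
  rw [prod_Icc_succ_top (by omega), prod_mul_distrib, hzero (m + 1) (by omega), cantorDenom_succ]
  simp only [beta_one, Nat.cast_one, div_one, cantorDenom]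
  ring

lemma tendsto_prod_left (hd : ∀ n, 1 ≤ n → 2 ≤ d n) (hsum : ∀ n, 1 ≤ n → beta p (d n) n = 1)
    (hG : ∀ σ, Admissible d σ → G (cantorVal d σ) = cantorF p σ) (hδ : Admissible d δ) {n : ℕ}
    (hn : 1 ≤ n) (hδn : δ n ≠ 0) (hzero : ∀ j, n < j → δ j = 0)
    (hder : HasDerivAt G L (cantorVal d δ)) :
    Tendsto (fun m => ∏ j ∈ Icc 1 m, (d j : ℝ) * p (altDigits d δ n j) j) atTop (𝓝 L) := by
  have ht : Tendsto (fun m => -(cantorDenom d m)⁻¹) atTop (𝓝 0) := by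
    simpa using (tendsto_cantorDenom_atTop hd).inv_tendsto_atTop.neg
  have ht0 : ∀ m, -(cantorDenom d m)⁻¹ ≠ 0 := fun m => by simp [(cantorDenom_pos hd m).ne']
  refine (hder.tendsto_inv_mul_sub ht ht0).congr' (eventually_atTop.2 ⟨n, fun m hm => ?_⟩)
  dsimp only
  rw [← sub_eq_add_neg, apply_sub_inv_cantorDenom hd hsum hG hδ hn hδn hzero hm, prod_mul_distrib,
    inv_neg, inv_inv, cantorDenom]
  ring

end Slopes

lemma eq_zero_of_tendsto_of_mul_nonpos {ι : Type*} {l : Filter ι} [l.NeBot] {a b : ι → ℝ} {L : ℝ}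
    (ha : Tendsto a l (𝓝 L)) (hb : Tendsto b l (𝓝 L)) (hab : ∀ m, a m * b m ≤ 0) : L = 0 :=
  mul_self_eq_zero.1 (le_antisymm (le_of_tendsto' (ha.mul hb) hab) (mul_self_nonneg L))

lemma prod_Icc_one_eq_mul_prod_Ioc {M : Type*} [CommMonoid M] (f : ℕ → M) {n m : ℕ} (h : n ≤ m) :
    ∏ j ∈ Icc 1 m, f j = (∏ j ∈ Icc 1 n, f j) * ∏ j ∈ Ioc n m, f j := by
  have e : ∀ k, Icc 1 k = Ioc 0 k := fun k => by simpa using Icc_add_one_left_eq_Ioc 0 k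
  rw [e, e, prod_Ioc_consecutive _ (Nat.zero_le n) h]

lemma tendsto_prod_Icc_zero_of_eq {a b : ℕ → ℝ} {n : ℕ} (hab : ∀ j, n < j → a j = b j)
    (ha : ∀ j ∈ Icc 1 n, a j ≠ 0) (h : Tendsto (fun m => ∏ j ∈ Icc 1 m, a j) atTop (𝓝 0)) :
    Tendsto (fun m => ∏ j ∈ Icc 1 m, b j) atTop (𝓝 0) := by
  have hC := h.const_mul ((∏ j ∈ Icc 1 n, b j) / ∏ j ∈ Icc 1 n, a j)
  rw [mul_zero] at hC
  refine hC.congr' (eventually_atTop.2 ⟨n, fun m hm => ?_⟩)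
  dsimp only
  rw [prod_Icc_one_eq_mul_prod_Ioc a hm, prod_Icc_one_eq_mul_prod_Ioc b hm,
    prod_congr rfl fun j hj => hab j (mem_Ioc.1 hj).1]
  field_simp [prod_ne_zero_iff.2 ha]

lemma three_le_of_mul_neg {d : ℕ} {q : ℕ → ℝ} (hd : 2 ≤ d)
    (hq : ∀ i, i < d → q i ∈ Set.Ioo (-1 : ℝ) 1)
    (hsum : ∑ i ∈ range d, q i = 1) (hsign : q 1 * q 0 < 0) : 3 ≤ d := by
  by_contra h
  obtain rfl : d = 2 := by omega
  rw [sum_range_succ, sum_range_one] at hsum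
  have h0 := hq 0 (by omega)
  have h1 := hq 1 (by omega)
  simp only [Set.mem_Ioo] at h0 h1
  nlinarith

lemma ne_zero_of_mul_neg {d : ℕ} {q : ℕ → ℝ} (hd : 2 ≤ d)
    (hsign : ∀ e, 1 ≤ e → e < d → q e * q (e - 1) < 0) {i : ℕ} (hi : i < d) : q i ≠ 0 := by
  rcases i with _ | i
  · exact right_ne_zero_of_mul (hsign 1 le_rfl hd).ne
  · exact left_ne_zero_of_mul (hsign (i + 1) (by omega) hi).ne

section Derivative

variable {d δ : ℕ → ℕ} {p : ℕ → ℕ → ℝ} {G : ℝ → ℝ} {L : ℝ}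

lemma eq_zero_of_hasDerivAt (hd3 : ∀ n, 1 ≤ n → 3 ≤ d n) (hsign : ∀ n, 1 ≤ n → p 1 n * p 0 n < 0)
    (hG : ∀ σ, Admissible d σ → G (cantorVal d σ) = cantorF p σ) (hδ : Admissible d δ) {n : ℕ}
    (hzero : ∀ j, n < j → δ j = 0) (hder : HasDerivAt G L (cantorVal d δ)) : L = 0 := by
  have hd : ∀ n, 1 ≤ n → 2 ≤ d n := fun n hn => (hd3 n hn).trans' (by norm_num)
  set Y : ℕ → ℝ := fun m => cantorDenom d (m + 1) * ∏ j ∈ Icc 1 m, p (δ j) j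
  have h1 := tendsto_right_slope hd hG hδ hzero hder one_ne_zero fun j hj => hd j (by omega)
  have h2 := tendsto_right_slope hd hG hδ hzero hder two_ne_zero fun j hj => hd3 j (by omega)
  refine eq_zero_of_tendsto_of_mul_nonpos (l := atTop) (a := fun m => p 0 (m + 1) * Y m)
    (b := fun m => p 1 (m + 1) * Y m) ?_ ?_ fun m => ?_
  · simpa only [beta_one, Nat.cast_one, div_one] using h1
  · have h := (h2.const_mul 2).sub h1
    rw [show 2 * L - L = L by ring] at h
    refine h.congr fun m => ?_
    simp only [beta, sum_range_succ, range_one, sum_singleton, Nat.cast_ofNat]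
    ring
  · calc p 0 (m + 1) * Y m * (p 1 (m + 1) * Y m)
        = p 1 (m + 1) * p 0 (m + 1) * (Y m * Y m) := by ring
      _ ≤ 0 := mul_nonpos_of_nonpos_of_nonneg (hsign _ (by omega)).le (mul_self_nonneg _)

theorem tendsto_prod_zero_of_hasDerivAt (hd3 : ∀ n, 1 ≤ n → 3 ≤ d n)
    (hsum : ∀ n, 1 ≤ n → beta p (d n) n = 1)
    (hsign : ∀ n, 1 ≤ n → ∀ e, 1 ≤ e → e < d n → p e n * p (e - 1) n < 0)
    (hG : ∀ σ, Admissible d σ → G (cantorVal d σ) = cantorF p σ) (hδ : Admissible d δ) {n : ℕ}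
    (hn : 1 ≤ n) (hδn : δ n ≠ 0) (hzero : ∀ j, n < j → δ j = 0)
    (hder : HasDerivAt G L (cantorVal d δ)) :
    Tendsto (fun m => ∏ k ∈ Icc 1 m, (d k : ℝ) * p 0 k) atTop (𝓝 0) ∧
      Tendsto (fun m => ∏ k ∈ Icc 1 m, (d k : ℝ) * p (d k - 1) k) atTop (𝓝 0) := by
  have hd : ∀ n, 1 ≤ n → 2 ≤ d n := fun n hn => (hd3 n hn).trans' (by norm_num)
  have hne : ∀ σ, Admissible d σ → ∀ j ∈ Icc 1 n, (d j : ℝ) * p (σ j) j ≠ 0 := fun σ hσ j hj =>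
    have hj := (mem_Icc.1 hj).1
    mul_ne_zero (Nat.cast_ne_zero.2 (by have := hd j hj; omega))
      (ne_zero_of_mul_neg (q := fun i => p i j) (hd j hj) (hsign j hj) (hσ j hj))
  obtain rfl := eq_zero_of_hasDerivAt hd3 (fun k hk => hsign k hk 1 le_rfl (hd k hk)) hG hδ hzero
    hder
  exact ⟨tendsto_prod_Icc_zero_of_eq (fun j hj => by rw [hzero j hj]) (hne δ hδ)
      (tendsto_prod_right hd hG hδ hzero hder),
    tendsto_prod_Icc_zero_of_eq (fun j hj => by rw [altDigits_of_gt hj]) (hne _ (hδ.altDigits hd n))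
      (tendsto_prod_left hd hsum hG hδ hn hδn hzero hder)⟩

end Derivative

theorem Ftil_not_differentiable_at_rational_general (d : ℕ → ℕ) (hd : ∀ n, 1 ≤ n → 2 ≤ d n)
    (p : ℕ → ℕ → ℝ)
    (hp : ∀ n, 1 ≤ n → ∀ i, i < d n → p i n ∈ Set.Ioo (-1 : ℝ) 1)
    (hsum : ∀ n, 1 ≤ n → ∑ i ∈ Finset.range (d n), p i n = 1)
    (hsign : ∀ n, 1 ≤ n → ∀ e, 1 ≤ e → e < d n → p e n * p (e - 1) n < 0)
    (hnotboth : ¬ (Filter.Tendsto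
        (fun n => ∏ k ∈ Finset.Icc 1 n, (d k : ℝ) * p 0 k) Filter.atTop (nhds 0) ∧
      Filter.Tendsto
        (fun n => ∏ k ∈ Finset.Icc 1 n, (d k : ℝ) * p (d k - 1) k) Filter.atTop (nhds 0)))
    (F : ℝ → ℝ)
    (hF : ∀ x ∈ Set.Icc (0 : ℝ) 1, ∀ ε : ℕ → ℕ, IsNegaRepr d ε x → F x = Ftil d p ε)
    (x₀ : ℝ)
    (ε ε' : ℕ → ℕ) (h₁ : IsNegaRepr d ε x₀) (h₂ : IsNegaRepr d ε' x₀)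
    (hne : ∃ n, 1 ≤ n ∧ ε n ≠ ε' n) :
    ¬ DifferentiableAt ℝ F x₀ := by
  intro hdiff
  obtain ⟨δ, n, hδ, rfl, hn, hδn, hzero⟩ := exists_terminating_of_isNegaRepr hd h₁ h₂ hne
  have hd3 : ∀ n, 1 ≤ n → 3 ≤ d n := fun n hn =>
    three_le_of_mul_neg (hd n hn) (hp n hn) (hsum n hn) (hsign n hn 1 le_rfl (hd n hn))
  exact hnotboth (tendsto_prod_zero_of_hasDerivAt hd3 hsum hsign
    (fun σ hσ => apply_cantorVal_eq_cantorF hd hF hσ) hδ hn hδn hzero hdiff.hasDerivAt)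

/-- If p_{ε,n}·p_{ε−1,n} < 0 for all n and all ε ∈ {1,…,d_n−1}, and the
limits of ∏_{k≤n} d_k p_{0,k} and ∏_{k≤n} d_k p_{d_k−1,k} are not both 0, then F̃ is not
differentiable at any nega-(d_n)-rational point x₀ of [0,1]. -/
theorem Ftil_not_differentiable_at_rational (d : ℕ → ℕ) (hd : ∀ n, 1 ≤ n → 2 ≤ d n)
    (p : ℕ → ℕ → ℝ)
    (hp : ∀ n, 1 ≤ n → ∀ i, i < d n → p i n ∈ Set.Ioo (-1 : ℝ) 1)
    (hsum : ∀ n, 1 ≤ n → ∑ i ∈ Finset.range (d n), p i n = 1)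
    (hprod : ∀ ι : ℕ → ℕ, (∀ n, 1 ≤ n → ι n < d n) →
      Filter.Tendsto (fun n => ∏ j ∈ Finset.Icc 1 n, |p (ι j) j|) Filter.atTop (nhds 0))
    (hbeta : ∀ n, 1 ≤ n → ∀ i, 1 ≤ i → i < d n → 0 < beta p i n)
    (hsign : ∀ n, 1 ≤ n → ∀ e, 1 ≤ e → e < d n → p e n * p (e - 1) n < 0)
    (hnotboth : ¬ (Filter.Tendsto
        (fun n => ∏ k ∈ Finset.Icc 1 n, (d k : ℝ) * p 0 k) Filter.atTop (nhds 0) ∧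
      Filter.Tendsto
        (fun n => ∏ k ∈ Finset.Icc 1 n, (d k : ℝ) * p (d k - 1) k) Filter.atTop (nhds 0)))
    (F : ℝ → ℝ)
    (hF : ∀ x ∈ Set.Icc (0 : ℝ) 1, ∀ ε : ℕ → ℕ, IsNegaRepr d ε x → F x = Ftil d p ε)
    (x₀ : ℝ) (hx₀ : x₀ ∈ Set.Icc (0 : ℝ) 1)
    (ε ε' : ℕ → ℕ) (h₁ : IsNegaRepr d ε x₀) (h₂ : IsNegaRepr d ε' x₀)
    (hne : ∃ n, 1 ≤ n ∧ ε n ≠ ε' n) :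
    ¬ DifferentiableAt ℝ F x₀ :=
  Ftil_not_differentiable_at_rational_general d hd p hp hsum hsign hnotboth F hF x₀ ε ε' h₁ h₂ hne
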